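/- For any ρ > 0, the probability that not all of the k* largest absolute values come from true components satisfies P[Ē_n*] ≤ k* π^{−1/2} ρ^{−1/2} n^{−ρ} for all sufficiently large n. -/

import Mathlib

set_option autoImplicit false

open MeasureTheory ProbabilityTheory Filter Real

/-! Let `b = min_{j ∈ K*} |β_j|` and take the threshold `t = √n b / (2σ)`, halfway between the
noise mean `0` and the smallest signal mean `√n b / σ`. If every `c̃_j` lies within `t` of its
mean, then every noise coefficient is below `t` in absolute value and every true one above it, so
the `k*` largest are exactly the true ones. A union bound over the `n` coefficients with the
sub-Gaussian tail `P(|Z| ≥ t) ≤ 2 exp(-t² / 2)` gives `P[Ē_n*] ≤ 2n exp(-n b² / (8σ²))`, which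
decays faster than any power of `n`. -/

open scoped NNReal

namespace ProbabilityTheory

lemma hasSubgaussianMGF_id_gaussianReal (v : ℝ≥0) :
    HasSubgaussianMGF id v (gaussianReal 0 v) where
  integrable_exp_mul t := integrable_exp_mul_gaussianReal t
  mgf_le t := by simp [mgf_id_gaussianReal]

lemma HasLaw.hasSubgaussianMGF {Ω : Type*} [MeasurableSpace Ω] {μ : Measure Ω} {X : Ω → ℝ}
    {v : ℝ≥0} (hX : HasLaw X (gaussianReal 0 v) μ) : HasSubgaussianMGF X v μ :=
  (HasSubgaussianMGF.id_map_iff hX.aemeasurable).1 (hX.map_eq ▸ hasSubgaussianMGF_id_gaussianReal v)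

lemma HasSubgaussianMGF.measureReal_abs_ge_le {Ω : Type*} [MeasurableSpace Ω] {μ : Measure Ω}
    {X : Ω → ℝ} {c : ℝ≥0} (h : HasSubgaussianMGF X c μ) {ε : ℝ} (hε : 0 ≤ ε) :
    μ.real {ω | ε ≤ |X ω|} ≤ 2 * exp (-ε ^ 2 / (2 * c)) := by
  have hsplit : {ω | ε ≤ |X ω|} = {ω | ε ≤ X ω} ∪ {ω | ε ≤ (-X) ω} := by
    ext ω
    simp [le_abs]
  calc μ.real {ω | ε ≤ |X ω|}
      ≤ μ.real {ω | ε ≤ X ω} + μ.real {ω | ε ≤ (-X) ω} := hsplit ▸ measureReal_union_le _ _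
    _ ≤ exp (-ε ^ 2 / (2 * c)) + exp (-ε ^ 2 / (2 * c)) :=
        add_le_add (h.measure_ge_le hε) (h.neg.measure_ge_le hε)
    _ = 2 * exp (-ε ^ 2 / (2 * c)) := (two_mul _).symm

end ProbabilityTheory

lemma apply_mem_of_strictAntiOn_of_threshold {n : ℕ} {K : Finset ℕ} (hK : K ⊆ Finset.Icc 1 n)
    {p : ℕ → ℕ} (hmaps : Set.MapsTo p (Set.Icc 1 n) (Set.Icc 1 n))
    (hsurj : Set.SurjOn p (Set.Icc 1 n) (Set.Icc 1 n)) {a : ℕ → ℝ}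
    (ha : StrictAntiOn (fun l => a (p l)) (Set.Icc 1 n)) {t : ℝ}
    (hlt : ∀ j ∈ Finset.Icc 1 n, j ∉ K → a j < t) (hgt : ∀ j ∈ K, t < a j)
    {l : ℕ} (hl : l ∈ Set.Icc 1 K.card) : p l ∈ K := by
  by_contra hpl
  have hln : l ∈ Set.Icc 1 n := ⟨hl.1, hl.2.trans (by simpa using Finset.card_le_card hK)⟩
  have hpl_lt : a (p l) < t := hlt _ (by simpa using hmaps hln) hpl
  -- Every index of `K` scores above `t > a (p l)`, so it is ranked strictly before `l`.
  have hK_image : K ⊆ (Finset.Ico 1 l).image p := by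
    intro j hj
    obtain ⟨q, hq, rfl⟩ := hsurj (by simpa using hK hj)
    refine Finset.mem_image.2 ⟨q, Finset.mem_Ico.2 ⟨hq.1, lt_of_not_ge fun hlq => ?_⟩, rfl⟩
    have hpq_le : a (p q) ≤ a (p l) := ha.antitoneOn hln hq hlq
    linarith [hgt _ hj]
  have hcard := (Finset.card_le_card hK_image).trans Finset.card_image_le
  rw [Nat.card_Ico] at hcard
  obtain ⟨hl1, hlK⟩ := hl
  omega

lemma measureReal_exists_rank_notMem_le {Ω : Type*} [MeasurableSpace Ω] {μ : Measure Ω}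
    [IsFiniteMeasure μ] {n : ℕ} {K : Finset ℕ} (hK : K ⊆ Finset.Icc 1 n) {m : ℕ → ℝ} {t : ℝ}
    (ht : 0 ≤ t) (hm_zero : ∀ j ∉ K, m j = 0) (hm_large : ∀ j ∈ K, 2 * t ≤ |m j|) {v : ℝ≥0}
    {X : ℕ → Ω → ℝ} (hX : ∀ j ∈ Finset.Icc 1 n, HasLaw (X j) (gaussianReal (m j) v) μ)
    {p : Ω → ℕ → ℕ}
    (hp : ∀ᵐ ω ∂μ, Set.BijOn (p ω) (Set.Icc 1 n) (Set.Icc 1 n) ∧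
      StrictAntiOn (fun l => |X (p ω l) ω|) (Set.Icc 1 n)) :
    μ.real {ω | ∃ l ∈ Set.Icc 1 K.card, p ω l ∉ K} ≤ n * (2 * exp (-t ^ 2 / (2 * v))) := by
  have hsub : ∀ᵐ ω ∂μ, ω ∈ {ω | ∃ l ∈ Set.Icc 1 K.card, p ω l ∉ K} →
      ω ∈ ⋃ j ∈ Finset.Icc 1 n, {ω | t ≤ |X j ω - m j|} := by
    filter_upwards [hp] with ω ⟨hbij, hsort⟩ ⟨l, hl, hpl⟩
    simp only [Set.mem_iUnion, Set.mem_ofPred]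
    by_contra! hclose
    have hnoise : ∀ j ∈ Finset.Icc 1 n, j ∉ K → |X j ω| < t := fun j hj hjK => by
      simpa [hm_zero j hjK] using hclose j hj
    have hsignal : ∀ j ∈ K, t < |X j ω| := fun j hj => by
      linarith [hm_large j hj, hclose j (hK hj), abs_sub_abs_le_abs_sub (m j) (X j ω),
        abs_sub_comm (X j ω) (m j)]
    exact hpl (apply_mem_of_strictAntiOn_of_threshold hK hbij.mapsTo hbij.surjOn hsort
      hnoise hsignal hl)
  calc μ.real {ω | ∃ l ∈ Set.Icc 1 K.card, p ω l ∉ K}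
      ≤ μ.real (⋃ j ∈ Finset.Icc 1 n, {ω | t ≤ |X j ω - m j|}) :=
        ENNReal.toReal_mono (measure_ne_top _ _) (measure_mono_ae hsub)
    _ ≤ ∑ j ∈ Finset.Icc 1 n, μ.real {ω | t ≤ |X j ω - m j|} := measureReal_biUnion_finset_le _ _
    _ ≤ ∑ _j ∈ Finset.Icc 1 n, 2 * exp (-t ^ 2 / (2 * v)) := by
        refine Finset.sum_le_sum fun j hj => ?_
        have hXj : HasLaw (fun ω => X j ω - m j) (gaussianReal 0 v) μ := by
          simpa using gaussianReal_sub_const (hX j hj) (m j)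
        exact hXj.hasSubgaussianMGF.measureReal_abs_ge_le ht
    _ = n * (2 * exp (-t ^ 2 / (2 * v))) := by simp

lemma eventually_mul_exp_neg_le_rpow {a C : ℝ} (ha : 0 < a) (hC : 0 < C) (ρ : ℝ) :
    ∀ᶠ n : ℕ in atTop, (n : ℝ) * (2 * exp (-a * n)) ≤ C * (n : ℝ) ^ (-ρ) := by
  have hlim := (tendsto_rpow_mul_exp_neg_mul_atTop_nhds_zero (ρ + 1) a ha).comp
    tendsto_natCast_atTop_atTop
  filter_upwards [hlim.eventually (eventually_le_nhds (half_pos hC)), eventually_gt_atTop 0]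
    with n hn hn0
  have hn0' : (0 : ℝ) < n := Nat.cast_pos.2 hn0
  have hsplit : (n : ℝ) = (n : ℝ) ^ (ρ + 1) * (n : ℝ) ^ (-ρ) := by
    rw [← rpow_add hn0']; norm_num
  calc (n : ℝ) * (2 * exp (-a * n))
      = 2 * ((n : ℝ) ^ (ρ + 1) * exp (-a * n)) * (n : ℝ) ^ (-ρ) := by
        nth_rw 1 [hsplit]; ring
    _ ≤ 2 * (C / 2) * (n : ℝ) ^ (-ρ) := by gcongr; exact hn
    _ = C * (n : ℝ) ^ (-ρ) := by ring

theorem prob_complement_Estar_bound_general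
    {Ω : Type*} [MeasureSpace Ω] [IsProbabilityMeasure (ℙ : Measure Ω)]
    (σ : ℝ) (hσ : 0 < σ)
    (Kstar : Finset ℕ) (hKne : Kstar.Nonempty) (hKpos : ∀ j ∈ Kstar, 1 ≤ j)
    (β : ℕ → ℝ) (hβ : ∀ j, β j ≠ 0 ↔ j ∈ Kstar)
    (c : ℕ → ℕ → Ω → ℝ) (hmeas : ∀ n j, Measurable (c n j))
    (hdist : ∀ n, Kstar.max' hKne < n → ∀ j ∈ Finset.Icc 1 n,
      Measure.map (c n j) ℙ = gaussianReal (Real.sqrt n * β j / σ) 1)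
    (p : ℕ → Ω → ℕ → ℕ)
    (hp : ∀ n, Kstar.max' hKne < n → ∀ᵐ ω ∂ℙ,
      Set.BijOn (p n ω) (Set.Icc 1 n) (Set.Icc 1 n) ∧
      ∀ l ∈ Set.Icc 1 n, ∀ r ∈ Set.Icc 1 n, l < r →
        |c n (p n ω r) ω| < |c n (p n ω l) ω|)
    (ρ : ℝ) (hρ : 0 < ρ) :
    ∃ N : ℕ, ∀ n ≥ N,
      (ℙ {ω | ∃ l ∈ Set.Icc 1 Kstar.card, p n ω l ∉ Kstar}).toReal
        ≤ Kstar.card * π ^ (-(1 : ℝ) / 2) * ρ ^ (-(1 : ℝ) / 2) * (n : ℝ) ^ (-ρ) := by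
  set b := Kstar.inf' hKne (fun j => |β j|)
  have hb : 0 < b := (Finset.lt_inf'_iff _).2 fun j hj => abs_pos.2 ((hβ j).2 hj)
  have hC : 0 < Kstar.card * π ^ (-(1 : ℝ) / 2) * ρ ^ (-(1 : ℝ) / 2) := by
    have := hKne.card_pos; have := pi_pos; positivity
  obtain ⟨N, hN⟩ := eventually_atTop.1 ((eventually_gt_atTop (Kstar.max' hKne)).and
    (eventually_mul_exp_neg_le_rpow (a := b ^ 2 / (8 * σ ^ 2)) (by positivity) hC ρ))
  refine ⟨N, fun n hn => ?_⟩
  obtain ⟨hMn, hbound⟩ := hN n hn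
  set t := √n * b / (2 * σ)
  have hK : Kstar ⊆ Finset.Icc 1 n := fun j hj =>
    Finset.mem_Icc.2 ⟨hKpos j hj, (Kstar.le_max' j hj).trans hMn.le⟩
  have hm_large : ∀ j ∈ Kstar, 2 * t ≤ |√n * β j / σ| := fun j hj => by
    rw [abs_div, abs_mul, abs_of_nonneg (sqrt_nonneg _), abs_of_pos hσ,
      show 2 * t = √n * b / σ by simp only [t]; field_simp]
    gcongr
    exact Finset.inf'_le _ hj
  calc _ ≤ n * (2 * exp (-t ^ 2 / (2 * (1 : ℝ≥0)))) :=
        measureReal_exists_rank_notMem_le hK (by positivity)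
          (fun j hj => by simp [not_not.1 (mt (hβ j).1 hj)]) hm_large
          (fun j hj => ⟨(hmeas n j).aemeasurable, hdist n hMn j hj⟩) (hp n hMn)
    _ = n * (2 * exp (-(b ^ 2 / (8 * σ ^ 2)) * n)) := by
        rw [div_pow, mul_pow, sq_sqrt n.cast_nonneg, NNReal.coe_one]; congr 3; field_simp; ring
    _ ≤ _ := hbound

/-- For any `ρ > 0`, the probability that not all of the `k*` largest absolute coefficients
come from true components, i.e. `P[Ē_n*]` where `E_n* = ⋂_{l=1}^{k*} {p_l ∈ K*}`, is at most
`k* π^{-1/2} ρ^{-1/2} n^{-ρ}` for all sufficiently large `n`. -/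
theorem prob_complement_Estar_bound
    {Ω : Type*} [MeasureSpace Ω] [IsProbabilityMeasure (ℙ : Measure Ω)]
    (σ : ℝ) (hσ : 0 < σ)
    (Kstar : Finset ℕ) (hKne : Kstar.Nonempty) (hKpos : ∀ j ∈ Kstar, 1 ≤ j)
    (β : ℕ → ℝ) (hβ : ∀ j, β j ≠ 0 ↔ j ∈ Kstar)
    (c : ℕ → ℕ → Ω → ℝ) (hmeas : ∀ n j, Measurable (c n j))
    (hdist : ∀ n, Kstar.max' hKne < n → ∀ j ∈ Finset.Icc 1 n,
      Measure.map (c n j) ℙ = gaussianReal (Real.sqrt n * β j / σ) 1)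
    (hindep : ∀ n, Kstar.max' hKne < n →
      iIndepFun
        (fun j : (Finset.Icc 1 n : Finset ℕ) => c n (j : ℕ)) ℙ)
    (p : ℕ → Ω → ℕ → ℕ) (hpmeas : ∀ n l, Measurable fun ω => p n ω l)
    (hp : ∀ n, Kstar.max' hKne < n → ∀ᵐ ω ∂ℙ,
      Set.BijOn (p n ω) (Set.Icc 1 n) (Set.Icc 1 n) ∧
      ∀ l ∈ Set.Icc 1 n, ∀ r ∈ Set.Icc 1 n, l < r →
        |c n (p n ω r) ω| < |c n (p n ω l) ω|)
    (ρ : ℝ) (hρ : 0 < ρ) :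
    ∃ N : ℕ, ∀ n ≥ N,
      (ℙ {ω | ∃ l ∈ Set.Icc 1 Kstar.card, p n ω l ∉ Kstar}).toReal
        ≤ Kstar.card * π ^ (-(1 : ℝ) / 2) * ρ ^ (-(1 : ℝ) / 2) * (n : ℝ) ^ (-ρ) :=
  prob_complement_Estar_bound_general σ hσ Kstar hKne hKpos β hβ c hmeas hdist p hp ρ hρ
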